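/- arXiv:2604.23154 — 7 statements merged into one kernel-verified Lean document; each statement's English description precedes it below -/
import Mathlib

section
/- Let γ > 0, θ ∈ [−1, 1], and s₁, s₂ ≥ 0. Then ∫₀^∞ e^{−w s₁} e^{−w s₂} {1 + θ (1 − e^{−w s₁})(1 − e^{−w s₂})} f_γ(w) dw = (1+θ){1 + γ(s₁+s₂)}^{−1/γ} − θ{1 + γ(2s₁+s₂)}^{−1/γ} − θ{1 + γ(s₁+2s₂)}^{−1/γ} + θ{1 + 2γ(s₁+s₂)}^{−1/γ}. Equivalently, the frailty-averaged FGM-copula survival term ∫₀^∞ C_θ(exp(−w s₁), exp(−w s₂)) f_γ(w) dw admits this four-term closed form. -/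
open MeasureTheory Real

/-- The gamma frailty density with shape `1/γ` and scale `γ`. -/
noncomputable def gammaFrailtyDensity (γ w : ℝ) : ℝ :=
  w ^ (1 / γ - 1) * Real.exp (-w / γ) / (Real.Gamma (1 / γ) * γ ^ (1 / γ))

/-! The four terms are values of the Laplace transform `s ↦ (1 + γ s) ^ (-1/γ)` of `f_γ`, since
expanding the FGM copula `C_θ(e^{-w s₁}, e^{-w s₂})` gives a linear combination of
`e^{-w s}` with `s ∈ {s₁ + s₂, 2 s₁ + s₂, s₁ + 2 s₂, 2 (s₁ + s₂)}`. -/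

lemma exp_neg_mul_mul_gammaFrailtyDensity (γ s w : ℝ) :
    exp (-(w * s)) * gammaFrailtyDensity γ w
      = w ^ (1 / γ - 1) * exp (-((s + 1 / γ) * w)) / (Gamma (1 / γ) * γ ^ (1 / γ)) := by
  have hexp : exp (-((s + 1 / γ) * w)) = exp (-(w * s)) * exp (-w / γ) := by
    rw [← exp_add]; ring_nf
  rw [gammaFrailtyDensity, hexp]; ring

lemma add_one_div_pos_of_one_add_mul_pos {γ s : ℝ} (hγ : 0 < γ) (hs : 0 < 1 + γ * s) :
    0 < s + 1 / γ := by
  have : s + 1 / γ = (1 + γ * s) / γ := by field_simp; ring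
  rw [this]; positivity

lemma integrableOn_exp_neg_mul_mul_gammaFrailtyDensity {γ s : ℝ} (hγ : 0 < γ)
    (hs : 0 < 1 + γ * s) :
    IntegrableOn (fun w => exp (-(w * s)) * gammaFrailtyDensity γ w) (Set.Ioi 0) := by
  have hgamma : IntegrableOn (fun w : ℝ => w ^ (1 / γ - 1) * exp (-(s + 1 / γ) * w ^ (1 : ℝ)))
      (Set.Ioi 0) :=
    integrableOn_rpow_mul_exp_neg_mul_rpow (by simp [hγ]) one_pos
      (add_one_div_pos_of_one_add_mul_pos hγ hs)
  simp only [rpow_one, neg_mul] at hgamma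
  simp_rw [exp_neg_mul_mul_gammaFrailtyDensity]
  exact hgamma.div_const _

lemma integral_exp_neg_mul_mul_gammaFrailtyDensity {γ s : ℝ} (hγ : 0 < γ)
    (hs : 0 < 1 + γ * s) :
    ∫ w in Set.Ioi (0 : ℝ), exp (-(w * s)) * gammaFrailtyDensity γ w
      = (1 + γ * s) ^ (-1 / γ) := by
  have hr := add_one_div_pos_of_one_add_mul_pos hγ hs
  have hscale : 1 + γ * s = γ * (s + 1 / γ) := by field_simp; ring
  simp_rw [exp_neg_mul_mul_gammaFrailtyDensity]
  rw [integral_div, integral_rpow_mul_exp_neg_mul_Ioi (by positivity) hr, hscale,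
    mul_rpow hγ.le hr.le, neg_div, rpow_neg hγ.le, rpow_neg hr.le, div_rpow zero_le_one hr.le,
    one_rpow]
  have hΓ : 0 < Gamma (1 / γ) := by positivity
  field_simp

theorem fgm_frailty_closed_form_general (γ θ : ℝ) (hγ : 0 < γ)
    (s₁ s₂ : ℝ) (hs₁ : 0 ≤ s₁) (hs₂ : 0 ≤ s₂) :
    ∫ w in Set.Ioi (0 : ℝ),
        (Real.exp (-(w * s₁)) * Real.exp (-(w * s₂)) *
          (1 + θ * (1 - Real.exp (-(w * s₁))) * (1 - Real.exp (-(w * s₂))))) *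
          gammaFrailtyDensity γ w
      = (1 + θ) * (1 + γ * (s₁ + s₂)) ^ (-1 / γ)
        - θ * (1 + γ * (2 * s₁ + s₂)) ^ (-1 / γ)
        - θ * (1 + γ * (s₁ + 2 * s₂)) ^ (-1 / γ)
        + θ * (1 + 2 * γ * (s₁ + s₂)) ^ (-1 / γ) := by
  set L := fun s w => exp (-(w * s)) * gammaFrailtyDensity γ w
  have hL : ∀ s, 0 ≤ s → IntegrableOn (L s) (Set.Ioi 0) ∧
      ∫ w in Set.Ioi (0 : ℝ), L s w = (1 + γ * s) ^ (-1 / γ) := fun s hs =>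
    have hs' : 0 < 1 + γ * s := by positivity
    ⟨integrableOn_exp_neg_mul_mul_gammaFrailtyDensity hγ hs',
      integral_exp_neg_mul_mul_gammaFrailtyDensity hγ hs'⟩
  have hexp : ∀ w a b, exp (-(w * (a + b))) = exp (-(w * a)) * exp (-(w * b)) := by
    intro w a b; rw [← exp_add]; ring_nf
  have hintegrand : ∀ w, (exp (-(w * s₁)) * exp (-(w * s₂)) *
      (1 + θ * (1 - exp (-(w * s₁))) * (1 - exp (-(w * s₂))))) * gammaFrailtyDensity γ w
      = (1 + θ) * L (s₁ + s₂) w - θ * L (s₁ + s₁ + s₂) w - θ * L (s₁ + (s₂ + s₂)) w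
        + θ * L (s₁ + s₂ + (s₁ + s₂)) w := by
    intro w; simp only [L, hexp]; ring
  obtain ⟨i₁, h₁⟩ := hL (s₁ + s₂) (by positivity)
  obtain ⟨i₂, h₂⟩ := hL (s₁ + s₁ + s₂) (by positivity)
  obtain ⟨i₃, h₃⟩ := hL (s₁ + (s₂ + s₂)) (by positivity)
  obtain ⟨i₄, h₄⟩ := hL (s₁ + s₂ + (s₁ + s₂)) (by positivity)
  simp_rw [hintegrand]
  rw [integral_add ?_ (i₄.const_mul _), integral_sub ?_ (i₃.const_mul _),
    integral_sub (i₁.const_mul _) (i₂.const_mul _), integral_const_mul, integral_const_mul,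
    integral_const_mul, integral_const_mul, h₁, h₂, h₃, h₄]
  · ring_nf
  · exact (i₁.const_mul _).sub (i₂.const_mul _)
  · exact ((i₁.const_mul _).sub (i₂.const_mul _)).sub (i₃.const_mul _)

/-- Closed form for the frailty-averaged FGM-copula survival term: for `γ > 0`,
`θ ∈ [-1,1]` and `s₁, s₂ ≥ 0`,
`∫₀^∞ C_θ(e^{-w s₁}, e^{-w s₂}) f_γ(w) dw` equals the displayed four-term expression,
where `C_θ(u,v) = uv{1 + θ(1-u)(1-v)}` is the FGM copula. -/
theorem fgm_frailty_closed_form (γ θ : ℝ) (hγ : 0 < γ) (hθ : θ ∈ Set.Icc (-1 : ℝ) 1)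
    (s₁ s₂ : ℝ) (hs₁ : 0 ≤ s₁) (hs₂ : 0 ≤ s₂) :
    ∫ w in Set.Ioi (0 : ℝ),
        (Real.exp (-(w * s₁)) * Real.exp (-(w * s₂)) *
          (1 + θ * (1 - Real.exp (-(w * s₁))) * (1 - Real.exp (-(w * s₂))))) *
          gammaFrailtyDensity γ w
      = (1 + θ) * (1 + γ * (s₁ + s₂)) ^ (-1 / γ)
        - θ * (1 + γ * (2 * s₁ + s₂)) ^ (-1 / γ)
        - θ * (1 + γ * (s₁ + 2 * s₂)) ^ (-1 / γ)
        + θ * (1 + 2 * γ * (s₁ + s₂)) ^ (-1 / γ) :=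
  fgm_frailty_closed_form_general γ θ hγ s₁ s₂ hs₁ hs₂
end

section
/- Let γ > 0 and let C : [0,1]² → [0,1] be a measurable function that is 2-increasing, i.e. C(u₂,v₂) − C(u₂,v₁) − C(u₁,v₂) + C(u₁,v₁) ≥ 0 whenever 0 ≤ u₁ ≤ u₂ ≤ 1 and 0 ≤ v₁ ≤ v₂ ≤ 1. Define, for u, v ∈ (0,1], C*(u,v) = ∫₀^∞ C(exp{−w(u^{−γ}−1)/γ}, exp{−w(v^{−γ}−1)/γ}) f_γ(w) dw. Then C* is 2-increasing on (0,1]²: for 0 < u₁ ≤ u₂ ≤ 1 and 0 < v₁ ≤ v₂ ≤ 1, C*(u₂,v₂) − C*(u₂,v₁) − C*(u₁,v₂) + C*(u₁,v₁) ≥ 0. -/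
/-!
Conditionally on the frailty `W = w`, the map `u ↦ exp (-w (u^{-γ} - 1) / γ)` is increasing and
sends `(0,1]` into `[0,1]`, so substituting it into both arguments of `C` keeps the rectangle
sums nonnegative for every `w`. Integrating against the nonnegative gamma density preserves this
sign, and the four integrals may be combined because `C` is bounded and the density integrable.
-/

open MeasureTheory Real

open Set

lemma gammaFrailtyDensity_nonneg {γ w : ℝ} (hγ : 0 < γ) (hw : 0 ≤ w) :
    0 ≤ gammaFrailtyDensity γ w := by
  unfold gammaFrailtyDensity
  positivity

lemma gammaFrailtyDensity_integrableOn {γ : ℝ} (hγ : 0 < γ) :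
    IntegrableOn (gammaFrailtyDensity γ) (Ioi 0) := by
  have hshape : -1 < 1 / γ - 1 := by linarith [one_div_pos.mpr hγ]
  have h := (integrableOn_rpow_mul_exp_neg_mul_rpow hshape one_pos (one_div_pos.mpr hγ)).div_const
    (Gamma (1 / γ) * γ ^ (1 / γ))
  refine IntegrableOn.congr_fun h (fun w _ => ?_) measurableSet_Ioi
  simp only [gammaFrailtyDensity, rpow_one]
  ring_nf

/-- Conditional survival given frailty `w`, as a function of the marginal survival `u`, in the
gamma frailty model. -/
noncomputable def frailtyTransform (γ w u : ℝ) : ℝ :=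
  exp (-(w * (u ^ (-γ) - 1) / γ))

lemma measurable_frailtyTransform (γ u : ℝ) : Measurable fun w => frailtyTransform γ w u := by
  unfold frailtyTransform
  fun_prop

lemma frailtyTransform_mem_Icc {γ w u : ℝ} (hγ : 0 < γ) (hw : 0 ≤ w) (hu : u ∈ Ioc 0 1) :
    frailtyTransform γ w u ∈ Icc 0 1 := by
  have hpow : 1 ≤ u ^ (-γ) := one_le_rpow_of_pos_of_le_one_of_nonpos hu.1 hu.2 (by linarith)
  refine ⟨(exp_pos _).le, exp_le_one_iff.mpr ?_⟩
  have : 0 ≤ w * (u ^ (-γ) - 1) / γ := div_nonneg (mul_nonneg hw (by linarith)) hγ.le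
  linarith

lemma frailtyTransform_monotoneOn {γ w : ℝ} (hγ : 0 < γ) (hw : 0 ≤ w) :
    MonotoneOn (frailtyTransform γ w) (Ioi 0) := by
  intro u hu v _ huv
  have hpow : v ^ (-γ) ≤ u ^ (-γ) := rpow_le_rpow_of_nonpos hu huv (by linarith)
  have : w * (v ^ (-γ) - 1) / γ ≤ w * (u ^ (-γ) - 1) / γ :=
    div_le_div_of_nonneg_right (mul_le_mul_of_nonneg_left (by linarith) hw) hγ.le
  exact exp_le_exp.mpr (by linarith)

section Mixture

variable {α : Type*} [MeasurableSpace α] {μ : Measure α}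

lemma integral_sub_sub_add_nonneg {f₂₂ f₂₁ f₁₂ f₁₁ : α → ℝ} (h₂₂ : Integrable f₂₂ μ)
    (h₂₁ : Integrable f₂₁ μ) (h₁₂ : Integrable f₁₂ μ) (h₁₁ : Integrable f₁₁ μ)
    (h : ∀ᵐ x ∂μ, 0 ≤ f₂₂ x - f₂₁ x - f₁₂ x + f₁₁ x) :
    0 ≤ ∫ x, f₂₂ x ∂μ - ∫ x, f₂₁ x ∂μ - ∫ x, f₁₂ x ∂μ + ∫ x, f₁₁ x ∂μ := by
  have hsum : ∫ x, (f₂₂ x - f₂₁ x - f₁₂ x + f₁₁ x) ∂μ =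
      ∫ x, f₂₂ x ∂μ - ∫ x, f₂₁ x ∂μ - ∫ x, f₁₂ x ∂μ + ∫ x, f₁₁ x ∂μ := by
    rw [integral_add (f := fun x => f₂₂ x - f₂₁ x - f₁₂ x) ((h₂₂.sub h₂₁).sub h₁₂) h₁₁,
      integral_sub (f := fun x => f₂₂ x - f₂₁ x) (h₂₂.sub h₂₁) h₁₂, integral_sub h₂₂ h₂₁]
  exact hsum ▸ integral_nonneg_of_ae h

variable {C : ℝ → ℝ → ℝ} {M : ℝ} {g a b : α → ℝ}

lemma integrable_comp_mul_of_bddOn (hCmeas : Measurable fun p : ℝ × ℝ => C p.1 p.2)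
    (hCbdd : ∀ x ∈ Icc (0 : ℝ) 1, ∀ y ∈ Icc (0 : ℝ) 1, |C x y| ≤ M) (hg : Integrable g μ)
    (ha : AEMeasurable a μ) (hb : AEMeasurable b μ)
    (hab : ∀ᵐ x ∂μ, a x ∈ Icc 0 1 ∧ b x ∈ Icc 0 1) :
    Integrable (fun x => C (a x) (b x) * g x) μ := by
  refine hg.bdd_mul (c := M) (hCmeas.comp_aemeasurable (ha.prodMk hb)).aestronglyMeasurable ?_
  filter_upwards [hab] with x ⟨hax, hbx⟩
  exact hCbdd _ hax _ hbx

theorem integral_twoIncreasing_mixture_nonneg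
    (hCmeas : Measurable fun p : ℝ × ℝ => C p.1 p.2)
    (hCbdd : ∀ x ∈ Icc (0 : ℝ) 1, ∀ y ∈ Icc (0 : ℝ) 1, |C x y| ≤ M)
    (hC2 : ∀ u₁ u₂ v₁ v₂ : ℝ, 0 ≤ u₁ → u₁ ≤ u₂ → u₂ ≤ 1 → 0 ≤ v₁ → v₁ ≤ v₂ → v₂ ≤ 1 →
      0 ≤ C u₂ v₂ - C u₂ v₁ - C u₁ v₂ + C u₁ v₁)
    (hg : Integrable g μ) (hg0 : 0 ≤ᵐ[μ] g) {a₁ a₂ b₁ b₂ : α → ℝ}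
    (ha₁ : AEMeasurable a₁ μ) (ha₂ : AEMeasurable a₂ μ)
    (hb₁ : AEMeasurable b₁ μ) (hb₂ : AEMeasurable b₂ μ)
    (ha : ∀ᵐ x ∂μ, 0 ≤ a₁ x ∧ a₁ x ≤ a₂ x ∧ a₂ x ≤ 1)
    (hb : ∀ᵐ x ∂μ, 0 ≤ b₁ x ∧ b₁ x ≤ b₂ x ∧ b₂ x ≤ 1) :
    0 ≤ ∫ x, C (a₂ x) (b₂ x) * g x ∂μ - ∫ x, C (a₂ x) (b₁ x) * g x ∂μ
      - ∫ x, C (a₁ x) (b₂ x) * g x ∂μ + ∫ x, C (a₁ x) (b₁ x) * g x ∂μ := by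
  have hunit : ∀ᵐ x ∂μ, (a₁ x ∈ Icc 0 1 ∧ a₂ x ∈ Icc 0 1) ∧ (b₁ x ∈ Icc 0 1 ∧ b₂ x ∈ Icc 0 1) := by
    filter_upwards [ha, hb] with x ⟨ha₁0, ha₁₂, ha₂1⟩ ⟨hb₁0, hb₁₂, hb₂1⟩
    exact ⟨⟨⟨ha₁0, ha₁₂.trans ha₂1⟩, ⟨ha₁0.trans ha₁₂, ha₂1⟩⟩,
      ⟨⟨hb₁0, hb₁₂.trans hb₂1⟩, ⟨hb₁0.trans hb₁₂, hb₂1⟩⟩⟩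
  have hint : ∀ {a b : α → ℝ}, AEMeasurable a μ → AEMeasurable b μ →
      (∀ᵐ x ∂μ, a x ∈ Icc 0 1 ∧ b x ∈ Icc 0 1) →
      Integrable (fun x => C (a x) (b x) * g x) μ :=
    integrable_comp_mul_of_bddOn hCmeas hCbdd hg
  refine integral_sub_sub_add_nonneg
    (hint ha₂ hb₂ (hunit.mono fun _ h => ⟨h.1.2, h.2.2⟩))
    (hint ha₂ hb₁ (hunit.mono fun _ h => ⟨h.1.2, h.2.1⟩))
    (hint ha₁ hb₂ (hunit.mono fun _ h => ⟨h.1.1, h.2.2⟩))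
    (hint ha₁ hb₁ (hunit.mono fun _ h => ⟨h.1.1, h.2.1⟩)) ?_
  filter_upwards [hg0, ha, hb] with x hgx ⟨ha₁0, ha₁₂, ha₂1⟩ ⟨hb₁0, hb₁₂, hb₂1⟩
  have hrect := mul_nonneg (hC2 _ _ _ _ ha₁0 ha₁₂ ha₂1 hb₁0 hb₁₂ hb₂1) hgx
  linarith

end Mixture

/-- The frailty transform preserves the 2-increasing property: if `C` is a measurable
`[0,1]²`-valued 2-increasing function, then
`C*(u,v) = ∫₀^∞ C(exp(-w(u^{-γ}-1)/γ), exp(-w(v^{-γ}-1)/γ)) f_γ(w) dw`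
is 2-increasing on `(0,1]²`. -/
theorem frailty_induced_copula_two_increasing (γ : ℝ) (hγ : 0 < γ)
    (C : ℝ → ℝ → ℝ)
    (hCmeas : Measurable fun p : ℝ × ℝ => C p.1 p.2)
    (hCrange : ∀ x ∈ Set.Icc (0 : ℝ) 1, ∀ y ∈ Set.Icc (0 : ℝ) 1, C x y ∈ Set.Icc (0 : ℝ) 1)
    (hC2 : ∀ u₁ u₂ v₁ v₂ : ℝ, 0 ≤ u₁ → u₁ ≤ u₂ → u₂ ≤ 1 → 0 ≤ v₁ → v₁ ≤ v₂ → v₂ ≤ 1 →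
      0 ≤ C u₂ v₂ - C u₂ v₁ - C u₁ v₂ + C u₁ v₁)
    (Cstar : ℝ → ℝ → ℝ)
    (hCstar : ∀ u ∈ Set.Ioc (0 : ℝ) 1, ∀ v ∈ Set.Ioc (0 : ℝ) 1,
      Cstar u v = ∫ w in Set.Ioi (0 : ℝ),
        C (Real.exp (-(w * (u ^ (-γ) - 1) / γ))) (Real.exp (-(w * (v ^ (-γ) - 1) / γ))) *
          gammaFrailtyDensity γ w) :
    ∀ u₁ u₂ v₁ v₂ : ℝ, 0 < u₁ → u₁ ≤ u₂ → u₂ ≤ 1 → 0 < v₁ → v₁ ≤ v₂ → v₂ ≤ 1 →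
      0 ≤ Cstar u₂ v₂ - Cstar u₂ v₁ - Cstar u₁ v₂ + Cstar u₁ v₁ := by
  intro u₁ u₂ v₁ v₂ hu₁ hu hu₂ hv₁ hv hv₂
  have hu₁' : u₁ ∈ Ioc 0 1 := ⟨hu₁, hu.trans hu₂⟩
  have hu₂' : u₂ ∈ Ioc 0 1 := ⟨hu₁.trans_le hu, hu₂⟩
  have hv₁' : v₁ ∈ Ioc 0 1 := ⟨hv₁, hv.trans hv₂⟩
  have hv₂' : v₂ ∈ Ioc 0 1 := ⟨hv₁.trans_le hv, hv₂⟩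
  have hsorted : ∀ {x₁ x₂ : ℝ}, x₁ ∈ Ioc 0 1 → x₂ ∈ Ioc 0 1 → x₁ ≤ x₂ →
      ∀ᵐ w ∂volume.restrict (Ioi 0), 0 ≤ frailtyTransform γ w x₁ ∧
        frailtyTransform γ w x₁ ≤ frailtyTransform γ w x₂ ∧ frailtyTransform γ w x₂ ≤ 1 :=
    fun hx₁ hx₂ hx => ae_restrict_of_forall_mem measurableSet_Ioi fun w (hw : 0 < w) =>
      ⟨(frailtyTransform_mem_Icc hγ hw.le hx₁).1,
        frailtyTransform_monotoneOn hγ hw.le hx₁.1 hx₂.1 hx,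
        (frailtyTransform_mem_Icc hγ hw.le hx₂).2⟩
  rw [hCstar u₂ hu₂' v₂ hv₂', hCstar u₂ hu₂' v₁ hv₁', hCstar u₁ hu₁' v₂ hv₂',
    hCstar u₁ hu₁' v₁ hv₁']
  exact integral_twoIncreasing_mixture_nonneg (M := 1) hCmeas
    (fun x hx y hy => abs_le.mpr ⟨by linarith [(hCrange x hx y hy).1], (hCrange x hx y hy).2⟩)
    hC2 (gammaFrailtyDensity_integrableOn hγ)
    (ae_restrict_of_forall_mem measurableSet_Ioi fun w (hw : 0 < w) =>
      gammaFrailtyDensity_nonneg hγ hw.le)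
    (measurable_frailtyTransform γ u₁).aemeasurable (measurable_frailtyTransform γ u₂).aemeasurable
    (measurable_frailtyTransform γ v₁).aemeasurable (measurable_frailtyTransform γ v₂).aemeasurable
    (hsorted hu₁' hu₂' hu) (hsorted hv₁' hv₂' hv)
end

section
/- Let γ > 0 and let M(u,v) = min(u,v) be the Fréchet–Hoeffding upper bound copula. Then for all u, v ∈ (0,1], ∫₀^∞ min(exp{−w(u^{−γ}−1)/γ}, exp{−w(v^{−γ}−1)/γ}) f_γ(w) dw = min(u, v); that is, the frailty-induced copula M* coincides with M. -/
open MeasureTheory Real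

lemma frailty_laplace (γ : ℝ) (hγ : 0 < γ) {u : ℝ} (hu : 0 < u) :
    ∫ w in Set.Ioi (0 : ℝ),
        Real.exp (-(w * (u ^ (-γ) - 1) / γ)) * gammaFrailtyDensity γ w = u := by
  have hs : 0 < 1 / γ := by positivity
  have hup : 0 < u ^ (-γ) := Real.rpow_pos_of_pos hu _
  have hr : 0 < u ^ (-γ) / γ := by positivity
  have hΓ : 0 < Real.Gamma (1 / γ) := Real.Gamma_pos_of_pos hs
  have hγp : (0:ℝ) < γ ^ (1 / γ) := Real.rpow_pos_of_pos hγ _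
  have hcongr : ∀ w ∈ Set.Ioi (0:ℝ),
      Real.exp (-(w * (u ^ (-γ) - 1) / γ)) * gammaFrailtyDensity γ w
        = (w ^ (1 / γ - 1) * Real.exp (-(u ^ (-γ) / γ * w)))
            * (Real.Gamma (1 / γ) * γ ^ (1 / γ))⁻¹ := by
    intro w _
    have he : Real.exp (-(w * (u ^ (-γ) - 1) / γ)) * Real.exp (-w / γ)
        = Real.exp (-(u ^ (-γ) / γ * w)) := by
      rw [← Real.exp_add]; congr 1; field_simp; ring
    unfold gammaFrailtyDensity
    linear_combination (w ^ (1 / γ - 1) * (Real.Gamma (1 / γ) * γ ^ (1 / γ))⁻¹) * he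
  rw [setIntegral_congr_fun measurableSet_Ioi hcongr, integral_mul_const,
    Real.integral_rpow_mul_exp_neg_mul_Ioi hs hr]
  have h1r : 1 / (u ^ (-γ) / γ) = γ * u ^ γ := by
    rw [Real.rpow_neg hu.le]
    field_simp
  rw [h1r, Real.mul_rpow hγ.le (Real.rpow_pos_of_pos hu γ).le,
    ← Real.rpow_mul hu.le, mul_one_div, div_self hγ.ne', Real.rpow_one]
  field_simp

lemma frailty_min_half (γ : ℝ) (hγ : 0 < γ) {u v : ℝ} (hu : 0 < u) (hv : 0 < v)
    (huv : u ≤ v) :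
    ∫ w in Set.Ioi (0 : ℝ),
        min (Real.exp (-(w * (u ^ (-γ) - 1) / γ))) (Real.exp (-(w * (v ^ (-γ) - 1) / γ))) *
          gammaFrailtyDensity γ w = u := by
  have hvu : v ^ (-γ) ≤ u ^ (-γ) := by
    rw [Real.rpow_neg hu.le, Real.rpow_neg hv.le]
    exact inv_anti₀ (Real.rpow_pos_of_pos hu γ)
      (Real.rpow_le_rpow hu.le huv hγ.le)
  rw [setIntegral_congr_fun measurableSet_Ioi (g := fun w =>
      Real.exp (-(w * (u ^ (-γ) - 1) / γ)) * gammaFrailtyDensity γ w) (fun w hw => ?_)]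
  · exact frailty_laplace γ hγ hu
  · have hw : 0 < w := hw
    have : -(w * (u ^ (-γ) - 1) / γ) ≤ -(w * (v ^ (-γ) - 1) / γ) := by
      apply neg_le_neg
      apply div_le_div_of_nonneg_right _ hγ.le
      nlinarith
    rw [min_eq_left (Real.exp_le_exp.2 this)]

/-- The Fréchet–Hoeffding upper bound copula `M(u,v) = min(u,v)` is invariant under
the gamma frailty transform: `M*(u,v) = min(u,v)` for all `u, v ∈ (0,1]`. -/
theorem frechet_upper_bound_frailty_invariant (γ : ℝ) (hγ : 0 < γ) :
    ∀ u ∈ Set.Ioc (0 : ℝ) 1, ∀ v ∈ Set.Ioc (0 : ℝ) 1,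
      ∫ w in Set.Ioi (0 : ℝ),
          min (Real.exp (-(w * (u ^ (-γ) - 1) / γ))) (Real.exp (-(w * (v ^ (-γ) - 1) / γ))) *
            gammaFrailtyDensity γ w
        = min u v := by
  intro u hu v hv
  rcases le_total u v with h | h
  · rw [min_eq_left h]
    exact frailty_min_half γ hγ hu.1 hv.1 h
  · rw [min_eq_right h]
    exact (setIntegral_congr_fun measurableSet_Ioi fun w _ => by rw [min_comm]).trans
      (frailty_min_half γ hγ hv.1 hu.1 h)
end

section
/- Let R > 0 with R ≠ 1 and p₁, p₂ ∈ (0,1). Then D := {(R−1)(p₁+p₂)+1}² − 4R(R−1)p₁p₂ > 0. -/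
/-- Positivity of the discriminant of the quadratic determining the joint cure
probability `p₁₁` from the marginals `(p₁, p₂)` and the odds ratio `R ≠ 1`. -/
theorem odds_ratio_discriminant_pos (R p₁ p₂ : ℝ) (hR : 0 < R) (hR1 : R ≠ 1)
    (hp₁ : p₁ ∈ Set.Ioo (0 : ℝ) 1) (hp₂ : p₂ ∈ Set.Ioo (0 : ℝ) 1) :
    0 < ((R - 1) * (p₁ + p₂) + 1) ^ 2 - 4 * R * (R - 1) * p₁ * p₂ := by
  obtain ⟨h1, h2⟩ := hp₁
  obtain ⟨h3, h4⟩ := hp₂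
  nlinarith [sq_nonneg ((p₁ - p₂) * R), sq_nonneg (p₁ + p₂ - 1),
    mul_pos hR (mul_pos h1 (sub_pos.mpr h2)),
    mul_pos hR (mul_pos h3 (sub_pos.mpr h4))]
end

section
/- Let R > 0 with R ≠ 1 and p₁, p₂ ∈ (0,1). Set D = {(R−1)(p₁+p₂)+1}² − 4R(R−1)p₁p₂ and p₁₁⁻ = [(R−1)(p₁+p₂)+1 − √D] / (2(R−1)). Then max(p₁ + p₂ − 1, 0) ≤ p₁₁⁻ ≤ min(p₁, p₂). Consequently p₁₀ = p₁ − p₁₁⁻, p₀₁ = p₂ − p₁₁⁻, and p₀₀ = 1 − p₁ − p₂ + p₁₁⁻ are all nonnegative, so p₁₁⁻ yields a valid 2×2 joint distribution with marginals (p₁, p₂). -/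
private lemma aux_le_sqrt {c D : ℝ} (h : c ^ 2 ≤ D) : c ≤ Real.sqrt D :=
  le_trans (le_abs_self c) (by
    rw [← Real.sqrt_sq_eq_abs]; exact Real.sqrt_le_sqrt h)

private lemma aux_sqrt_le {c D : ℝ} (hc : 0 ≤ c) (h : D ≤ c ^ 2) : Real.sqrt D ≤ c := by
  calc Real.sqrt D ≤ Real.sqrt (c ^ 2) := Real.sqrt_le_sqrt h
  _ = c := Real.sqrt_sq hc

set_option maxHeartbeats 1600000 in
/-- The minus-sign root `p₁₁⁻` obeys the Fréchet–Hoeffding bounds, hence yields a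
valid 2×2 joint distribution with marginals `(p₁, p₂)`: all four induced cell
probabilities are nonnegative. -/
theorem odds_ratio_root_frechet_bounds (R p₁ p₂ : ℝ) (hR : 0 < R) (hR1 : R ≠ 1)
    (hp₁ : p₁ ∈ Set.Ioo (0 : ℝ) 1) (hp₂ : p₂ ∈ Set.Ioo (0 : ℝ) 1)
    (D p₁₁ : ℝ)
    (hD : D = ((R - 1) * (p₁ + p₂) + 1) ^ 2 - 4 * R * (R - 1) * p₁ * p₂)
    (hp₁₁ : p₁₁ = ((R - 1) * (p₁ + p₂) + 1 - Real.sqrt D) / (2 * (R - 1))) :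
    max (p₁ + p₂ - 1) 0 ≤ p₁₁ ∧ p₁₁ ≤ min p₁ p₂ ∧
    0 ≤ p₁ - p₁₁ ∧ 0 ≤ p₂ - p₁₁ ∧ 0 ≤ 1 - p₁ - p₂ + p₁₁ := by
  obtain ⟨h1, h2⟩ := hp₁
  obtain ⟨h3, h4⟩ := hp₂
  set t := Real.sqrt D with htdef
  have ht0 : 0 ≤ t := Real.sqrt_nonneg D
  have key : p₁ + p₂ - 1 ≤ p₁₁ ∧ 0 ≤ p₁₁ ∧ p₁₁ ≤ p₁ ∧ p₁₁ ≤ p₂ := by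
    rcases lt_or_gt_of_ne hR1 with hlt | hgt
    · -- R < 1
      have h2a : 2 * (R - 1) < 0 := by linarith
      have hC : p₁₁ ≤ p₁ := by
        have htle : t ≤ (R - 1) * (p₂ - p₁) + 1 :=
          aux_sqrt_le (by nlinarith)
            (by nlinarith [mul_pos (show (0:ℝ) < 1 - R by linarith) (mul_pos h1 (show (0:ℝ) < 1 - p₂ by linarith))])
        rw [hp₁₁, div_le_iff_of_neg h2a]; nlinarith
      have hC' : p₁₁ ≤ p₂ := by
        have htle : t ≤ (R - 1) * (p₁ - p₂) + 1 :=
          aux_sqrt_le (by nlinarith)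
            (by nlinarith [mul_pos (show (0:ℝ) < 1 - R by linarith) (mul_pos h3 (show (0:ℝ) < 1 - p₁ by linarith))])
        rw [hp₁₁, div_le_iff_of_neg h2a]; nlinarith
      have hB : 0 ≤ p₁₁ := by
        have htge : (R - 1) * (p₁ + p₂) + 1 ≤ t := aux_le_sqrt
          (by nlinarith [mul_pos (mul_pos (mul_pos hR (show (0:ℝ) < 1 - R by linarith)) h1) h3])
        rw [hp₁₁, le_div_iff_of_neg h2a]; nlinarith
      have hA : p₁ + p₂ - 1 ≤ p₁₁ := by
        have htge : (R - 1) * (2 - p₁ - p₂) + 1 ≤ t := aux_le_sqrt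
          (by nlinarith [mul_pos (mul_pos (mul_pos hR (show (0:ℝ) < 1 - R by linarith)) (show (0:ℝ) < 1 - p₁ by linarith)) (show (0:ℝ) < 1 - p₂ by linarith)])
        rw [hp₁₁, le_div_iff_of_neg h2a]; nlinarith
      exact ⟨hA, hB, hC, hC'⟩
    · -- R > 1
      have h2a : (0 : ℝ) < 2 * (R - 1) := by linarith
      have hC : p₁₁ ≤ p₁ := by
        have htge : (R - 1) * (p₂ - p₁) + 1 ≤ t := aux_le_sqrt
          (by nlinarith [mul_pos (show (0:ℝ) < R - 1 by linarith) (mul_pos h1 (show (0:ℝ) < 1 - p₂ by linarith))])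
        rw [hp₁₁, div_le_iff₀ h2a]; nlinarith
      have hC' : p₁₁ ≤ p₂ := by
        have htge : (R - 1) * (p₁ - p₂) + 1 ≤ t := aux_le_sqrt
          (by nlinarith [mul_pos (show (0:ℝ) < R - 1 by linarith) (mul_pos h3 (show (0:ℝ) < 1 - p₁ by linarith))])
        rw [hp₁₁, div_le_iff₀ h2a]; nlinarith
      have hB : 0 ≤ p₁₁ := by
        have htle : t ≤ (R - 1) * (p₁ + p₂) + 1 :=
          aux_sqrt_le (by nlinarith)
            (by nlinarith [mul_pos (mul_pos (mul_pos hR (show (0:ℝ) < R - 1 by linarith)) h1) h3])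
        rw [hp₁₁, le_div_iff₀ h2a]; nlinarith
      have hA : p₁ + p₂ - 1 ≤ p₁₁ := by
        have htle : t ≤ (R - 1) * (2 - p₁ - p₂) + 1 :=
          aux_sqrt_le (by nlinarith)
            (by nlinarith [mul_pos (mul_pos (mul_pos hR (show (0:ℝ) < R - 1 by linarith)) (show (0:ℝ) < 1 - p₁ by linarith)) (show (0:ℝ) < 1 - p₂ by linarith)])
        rw [hp₁₁, le_div_iff₀ h2a]; nlinarith
      exact ⟨hA, hB, hC, hC'⟩
  obtain ⟨hA, hB, hC, hC'⟩ := key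
  exact ⟨max_le hA hB, le_min hC hC', by linarith, by linarith, by linarith⟩
end

section
/- Let R > 1 and p₁, p₂ ∈ (0,1). Set D = {(R−1)(p₁+p₂)+1}² − 4R(R−1)p₁p₂ and p₁₁⁺ = [(R−1)(p₁+p₂)+1 + √D] / (2(R−1)). Then p₁₁⁺ > min(p₁, p₂); in particular, p₁₁⁺ violates the Fréchet upper bound and is not a valid joint probability. -/
/-- For `R > 1`, the plus-sign root `p₁₁⁺` of the odds-ratio quadratic exceeds
`min(p₁, p₂)`, violating the Fréchet upper bound, hence is not a valid joint
probability. -/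
theorem odds_ratio_plus_root_too_large (R p₁ p₂ : ℝ) (hR : 1 < R)
    (hp₁ : p₁ ∈ Set.Ioo (0 : ℝ) 1) (hp₂ : p₂ ∈ Set.Ioo (0 : ℝ) 1)
    (D p₁₁ : ℝ)
    (hD : D = ((R - 1) * (p₁ + p₂) + 1) ^ 2 - 4 * R * (R - 1) * p₁ * p₂)
    (hp₁₁ : p₁₁ = ((R - 1) * (p₁ + p₂) + 1 + Real.sqrt D) / (2 * (R - 1))) :
    min p₁ p₂ < p₁₁ := by
  have hpos : (0 : ℝ) < 2 * (R - 1) := by linarith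
  rw [hp₁₁, lt_div_iff₀ hpos]
  have hs : 0 ≤ Real.sqrt D := Real.sqrt_nonneg D
  rcases min_le_left p₁ p₂ |>.lt_or_eq with _ | _ <;>
    nlinarith [min_le_left p₁ p₂, min_le_right p₁ p₂]
end

section
/- Let p₁₁, p₁₀, p₀₁, p₀₀ ≥ 0 with p₁₁ + p₁₀ + p₀₁ + p₀₀ = 1, set p₁ = p₁₁ + p₁₀ and p₂ = p₁₁ + p₀₁, and assume p₁ < 1 and p₂ < 1. Then for every τ₀₀ ∈ [0, 1], −2/3 ≤ [2(p₁₁p₀₀ − p₀₁p₁₀) + p₀₀² τ₀₀] / √((1 − p₁²)(1 − p₂²)) ≤ 1, and the lower bound −2/3 is attained at p₀₀ = p₁₁ = 0, p₁₀ = p₀₁ = 1/2 (with τ₀₀ arbitrary, since p₀₀ = 0), while the upper bound 1 is attained at p₀₀ = 1 and τ₀₀ = 1. -/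
set_option maxHeartbeats 1000000 in
/-- Attainable range of the tie-adjusted Kendall's tau
`τ_b = [2(p₁₁p₀₀ - p₀₁p₁₀) + p₀₀² τ₀₀] / √((1-p₁²)(1-p₂²))` in the bivariate cure
model: `-2/3 ≤ τ_b ≤ 1` for `τ₀₀ ∈ [0,1]`, with the lower bound attained at
`p₀₀ = p₁₁ = 0`, `p₁₀ = p₀₁ = 1/2` (with `τ₀₀` arbitrary) and the upper bound
attained at `p₀₀ = 1`, `τ₀₀ = 1`. -/
theorem tie_adjusted_kendall_tau_range :
    (∀ p₁₁ p₁₀ p₀₁ p₀₀ τ₀₀ : ℝ,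
      0 ≤ p₁₁ → 0 ≤ p₁₀ → 0 ≤ p₀₁ → 0 ≤ p₀₀ →
      p₁₁ + p₁₀ + p₀₁ + p₀₀ = 1 →
      p₁₁ + p₁₀ < 1 → p₁₁ + p₀₁ < 1 →
      τ₀₀ ∈ Set.Icc (0 : ℝ) 1 →
      -2 / 3 ≤ (2 * (p₁₁ * p₀₀ - p₀₁ * p₁₀) + p₀₀ ^ 2 * τ₀₀) /
          Real.sqrt ((1 - (p₁₁ + p₁₀) ^ 2) * (1 - (p₁₁ + p₀₁) ^ 2)) ∧
        (2 * (p₁₁ * p₀₀ - p₀₁ * p₁₀) + p₀₀ ^ 2 * τ₀₀) /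
          Real.sqrt ((1 - (p₁₁ + p₁₀) ^ 2) * (1 - (p₁₁ + p₀₁) ^ 2)) ≤ 1) ∧
    -- the lower bound is attained at `p₀₀ = p₁₁ = 0`, `p₁₀ = p₀₁ = 1/2`
    (∀ τ₀₀ : ℝ,
      (2 * ((0:ℝ) * 0 - (1/2) * (1/2)) + (0:ℝ) ^ 2 * τ₀₀) /
          Real.sqrt ((1 - ((0:ℝ) + 1/2) ^ 2) * (1 - ((0:ℝ) + 1/2) ^ 2)) = -2 / 3) ∧
    -- the upper bound is attained at `p₀₀ = 1`, `τ₀₀ = 1`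
    (2 * ((0:ℝ) * 1 - 0 * 0) + (1:ℝ) ^ 2 * 1) /
        Real.sqrt ((1 - ((0:ℝ) + 0) ^ 2) * (1 - ((0:ℝ) + 0) ^ 2)) = 1 := by
  refine ⟨?_, ?_, ?_⟩
  · intro a b c d τ ha hb hc hd hsum h1 h2 hτ
    obtain ⟨hτ0, hτ1⟩ := hτ
    set X : ℝ := 1 - (a + b) ^ 2 with hXdef
    set Y : ℝ := 1 - (a + c) ^ 2 with hYdef
    have hX : 0 < X := by nlinarith
    have hY : 0 < Y := by nlinarith
    have hXY : 0 < X * Y := mul_pos hX hY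
    set N : ℝ := 2 * (a * d - c * b) + d ^ 2 * τ with hNdef
    have hNX : N ≤ X := by
      nlinarith [mul_nonneg hb hc, mul_nonneg ha hc, mul_nonneg hb hd, mul_nonneg ha hd, sq_nonneg d, mul_nonneg (mul_nonneg hd hd) (sub_nonneg.mpr hτ1)]
    have hNY : N ≤ Y := by
      nlinarith [mul_nonneg hb hc, mul_nonneg ha hb, mul_nonneg hc hd, mul_nonneg ha hd, mul_nonneg (mul_nonneg hd hd) (sub_nonneg.mpr hτ1)]
    have hNsq : N ^ 2 ≤ X * Y ∨ N ≤ 0 := by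
      rcases le_or_gt N 0 with h | h
      · exact Or.inr h
      · exact Or.inl (by nlinarith)
    have hbc : (3 * (b * c)) ^ 2 ≤ X * Y := by
      have hbc1 : b + c ≤ 1 := by nlinarith
      have h8 : 8 * (b * c) ≤ 1 + b + c := by nlinarith [sq_nonneg (b - c)]
      have hmul := mul_le_mul_of_nonneg_left h8 (mul_nonneg hb hc)
      have hfac : 9 * (b * c) * (b * c) ≤ (b * (1 + c)) * (c * (1 + b)) := by nlinarith [sq_nonneg (b * c)]
      have hXf : c * (1 + b) ≤ X := by
        nlinarith [mul_nonneg ha hc, mul_nonneg hc hd, mul_nonneg hd (by nlinarith : (0:ℝ) ≤ 1 + a + b), mul_nonneg hc ha]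
      have hYf : b * (1 + c) ≤ Y := by
        nlinarith [mul_nonneg ha hb, mul_nonneg hb hd, mul_nonneg hd (by nlinarith : (0:ℝ) ≤ 1 + a + c)]
      have hb1 : 0 ≤ b * (1 + c) := mul_nonneg hb (by linarith)
      have hprod : (c * (1 + b)) * (b * (1 + c)) ≤ X * Y := mul_le_mul hXf hYf hb1 hX.le
      nlinarith [hfac, hprod]
    have hNge : -(2 * (b * c)) ≤ N := by
      nlinarith [mul_nonneg ha hd, mul_nonneg (mul_nonneg hd hd) hτ0]
    have hD : 0 < Real.sqrt (X * Y) := Real.sqrt_pos.mpr hXY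
    have hupper : N ≤ Real.sqrt (X * Y) := by
      rcases hNsq with h | h
      · rcases le_or_gt N 0 with h0 | h0
        · exact h0.trans (Real.sqrt_nonneg _)
        · calc N = Real.sqrt (N ^ 2) := by rw [Real.sqrt_sq h0.le]
          _ ≤ Real.sqrt (X * Y) := Real.sqrt_le_sqrt h
      · exact h.trans (Real.sqrt_nonneg _)
    have h3bc : 3 * (b * c) ≤ Real.sqrt (X * Y) := by
      have h0 : 0 ≤ 3 * (b * c) := by positivity
      calc 3 * (b * c) = Real.sqrt ((3 * (b * c)) ^ 2) := by rw [Real.sqrt_sq h0]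
      _ ≤ Real.sqrt (X * Y) := Real.sqrt_le_sqrt hbc
    have hlower : -(2 / 3) * Real.sqrt (X * Y) ≤ N := by linarith
    constructor
    · rw [le_div_iff₀ hD]
      linarith
    · rw [div_le_one hD]
      exact hupper
  · intro τ
    have : ((1 - ((0:ℝ) + 1/2) ^ 2) * (1 - ((0:ℝ) + 1/2) ^ 2)) = (3/4 : ℝ) ^ 2 := by norm_num
    rw [this, Real.sqrt_sq (by norm_num : (0:ℝ) ≤ 3/4)]
    norm_num
  · have : ((1 - ((0:ℝ) + 0) ^ 2) * (1 - ((0:ℝ) + 0) ^ 2)) = (1 : ℝ) ^ 2 := by norm_num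
    rw [this, Real.sqrt_sq (by norm_num : (0:ℝ) ≤ 1)]
    norm_num
end
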